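/- Complexity recursion bound for multilevel Picard schemes: suppose nonnegative integers C_{n,M} satisfy, for all n, M ∈ N, C_{n,M} ≤ M^n (M^M e + g)·1_{N}(n) + Σ_{l=0}^{n−1} M^{n−l}(M^M e + f + C_{l,M} + C_{l−1,M}) (with C_{0,M} and C_{−1,M} interpreted as 0 where appropriate). Then for all n ∈ N, Σ_{k=1}^{n+1} C_{k,k} ≤ 12(3e + g + 2f)·36^n·n^{2n}. -/

import Mathlib

/-! For fixed `M ≥ 1` and `B = M^M (3e + g + 2f)`, strong induction on `n` gives
`C n M ≤ B (3M)^n`: inserted into the recursion, this bound turns the terms `M^(n-l) C l M` and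
`M^(n-l) C (l-1) M` into geometric sums `B M^n Σ 3^l`, which leave room `B M^n (3^(n-1) + 1)`
for the inhomogeneous terms, and these are at most `n M^n (2 M^M e + g + f)`. On the diagonal
this reads `C k k ≤ (3e + g + 2f) (3k²)^k`, and summing over `k ≤ n + 1` gives the claim. -/

open Finset

theorem two_mul_sum_pow_sub_mul_add_le {M B n : ℕ} {c : ℕ → ℕ}
    (hc : ∀ l < n, c l ≤ B * (3 * M) ^ l) :
    2 * ∑ l ∈ range n, M ^ (n - l) * c l + B * M ^ n ≤ B * (3 * M) ^ n := by
  have hterm : ∀ l ∈ range n, M ^ (n - l) * c l ≤ B * M ^ n * 3 ^ l := by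
    intro l hl
    have hln : l ≤ n := (mem_range.1 hl).le
    calc M ^ (n - l) * c l ≤ M ^ (n - l) * (B * (3 * M) ^ l) :=
          Nat.mul_le_mul_left _ (hc l (mem_range.1 hl))
      _ = B * (M ^ (n - l) * M ^ l) * 3 ^ l := by ring
      _ = B * M ^ n * 3 ^ l := by rw [← pow_add, Nat.sub_add_cancel hln]
  calc 2 * ∑ l ∈ range n, M ^ (n - l) * c l + B * M ^ n
      ≤ 2 * ∑ l ∈ range n, B * M ^ n * 3 ^ l + B * M ^ n := by
        gcongr 2 * ?_ + _
        exact sum_le_sum hterm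
    _ = B * M ^ n * ((∑ l ∈ range n, 3 ^ l) * 2 + 1) := by rw [← mul_sum]; ring
    _ = B * (3 * M) ^ n := by
        have hgeom : (∑ l ∈ range n, 3 ^ l) * 2 + 1 = 3 ^ n := geom_sum_mul_add 2 n
        rw [hgeom, mul_pow]; ring

theorem sum_range_succ_pow_sub_mul_pred {M m : ℕ} {c : ℤ → ℕ} (hc : c (-1) = 0) :
    ∑ l ∈ range (m + 1), M ^ (m + 1 - l) * c (l - 1) = ∑ l ∈ range m, M ^ (m - l) * c l := by
  rw [sum_range_succ']
  simp [hc, Nat.add_sub_add_right]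

theorem le_mul_three_mul_pow_of_le_sum {M x y B : ℕ} {c : ℤ → ℕ} (hM : 1 ≤ M) (hB : x + y ≤ B)
    (hc : ∀ n : ℤ, n ≤ 0 → c n = 0)
    (hrec : ∀ n : ℕ, 1 ≤ n →
      c n ≤ M ^ n * x + ∑ l ∈ range n, M ^ (n - l) * (y + c l + c (l - 1))) :
    ∀ n : ℕ, c n ≤ B * (3 * M) ^ n := by
  intro n
  induction n using Nat.strong_induction_on with
  | _ n ih =>
  obtain _ | m := n
  · simp [hc 0 le_rfl]
  have ih' : ∀ l < m + 1, (fun l : ℕ => c l) l ≤ B * (3 * M) ^ l := ih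
  have hS := two_mul_sum_pow_sub_mul_add_le ih'
  have hS' := two_mul_sum_pow_sub_mul_add_le (n := m) fun l hl => ih' l (by omega)
  have hY : ∑ l ∈ range (m + 1), M ^ (m + 1 - l) * y ≤ (m + 1) * (M ^ (m + 1) * y) := by
    simpa using sum_le_card_nsmul (range (m + 1)) _ _ fun l _ =>
      Nat.mul_le_mul_right y (Nat.pow_le_pow_right hM (Nat.sub_le (m + 1) l))
  have hxy : x + (m + 1) * y ≤ B * 3 ^ m := by
    have hm : m + 1 ≤ 3 ^ m := Nat.lt_pow_self (by norm_num)
    nlinarith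
  have hrec' := hrec (m + 1) (by omega)
  simp only [mul_add, sum_add_distrib, sum_range_succ_pow_sub_mul_pred (hc (-1) (by norm_num))]
    at hrec'
  simp only [pow_succ, mul_pow] at hS hS' hY hrec' ⊢
  have hMQ : M ^ m * M * (x + (m + 1) * y) ≤ M ^ m * M * (B * 3 ^ m) :=
    Nat.mul_le_mul_left _ hxy
  have hBPQ : B * (3 ^ m * M ^ m) ≤ B * (3 ^ m * M ^ m) * M := Nat.le_mul_of_pos_right _ hM
  linarith [Nat.zero_le (B * (M ^ m * M)), Nat.zero_le (B * M ^ m)]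

theorem succ_pow_three_le (n : ℕ) : (n + 1) ^ 3 ≤ 4 * 3 ^ n := by
  induction n with
  | zero => norm_num
  | succ n ih =>
    rcases lt_or_ge n 2 with hn | hn
    · interval_cases n <;> norm_num
    · have hstep : (n + 2) ^ 3 ≤ 3 * (n + 1) ^ 3 := by
        nlinarith [Nat.mul_le_mul hn hn, Nat.mul_le_mul (Nat.mul_le_mul hn hn) hn]
      calc (n + 1 + 1) ^ 3 = (n + 2) ^ 3 := by ring
        _ ≤ 3 * (4 * 3 ^ n) := by omega
        _ = 4 * 3 ^ (n + 1) := by ring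

theorem succ_mul_three_mul_sq_pow_le {n : ℕ} (hn : 1 ≤ n) :
    (n + 1) * (3 * (n + 1) ^ 2) ^ (n + 1) ≤ 12 * 36 ^ n * n ^ (2 * n) := by
  calc (n + 1) * (3 * (n + 1) ^ 2) ^ (n + 1) = 3 * (n + 1) ^ 3 * (3 * (n + 1) ^ 2) ^ n := by ring
    _ ≤ 3 * (4 * 3 ^ n) * (3 * (4 * n ^ 2)) ^ n := by
        gcongr
        · exact succ_pow_three_le n
        · nlinarith
    _ = 12 * 36 ^ n * n ^ (2 * n) := by
        rw [show (36 : ℕ) = 3 * 3 * 4 by norm_num]; simp only [mul_pow, ← pow_mul]; ring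

theorem stmt15_general
    (e g f : ℕ)
    (C : ℤ → ℕ → ℕ)
    (hzero : ∀ n : ℤ, n ≤ 0 → ∀ M : ℕ, C n M = 0)
    (hrec : ∀ n M : ℕ, 1 ≤ M →
      C n M ≤ (if 1 ≤ n then M ^ n * (M ^ M * e + g) else 0)
        + ∑ l ∈ Finset.range n,
            M ^ (n - l) * (M ^ M * e + f + C l M + C ((l : ℤ) - 1) M)) :
    ∀ n : ℕ, 1 ≤ n →
      ∑ k ∈ Finset.Icc 1 (n + 1), C k k
        ≤ 12 * (3 * e + g + 2 * f) * 36 ^ n * n ^ (2 * n) := by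
  intro n hn
  set D := 3 * e + g + 2 * f with hD
  have hdiag : ∀ k : ℕ, 1 ≤ k → C k k ≤ D * (3 * k ^ 2) ^ k := by
    intro k hk
    have hkk : 1 ≤ k ^ k := Nat.one_le_pow _ _ hk
    have hB : (k ^ k * e + g) + (k ^ k * e + f) ≤ k ^ k * D := by
      rw [hD]; nlinarith [Nat.le_mul_of_pos_left g hkk, Nat.le_mul_of_pos_left f hkk]
    calc C k k ≤ k ^ k * D * (3 * k) ^ k :=
          le_mul_three_mul_pow_of_le_sum hk hB (fun j hj => hzero j hj k)
            (fun m hm => by simpa [if_pos hm] using hrec m k hk) k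
      _ = D * (3 * k ^ 2) ^ k := by ring
  calc ∑ k ∈ Icc 1 (n + 1), C k k ≤ ∑ _k ∈ Icc 1 (n + 1), D * (3 * (n + 1) ^ 2) ^ (n + 1) := by
        refine sum_le_sum fun k hk => ?_
        obtain ⟨hk1, hkn⟩ := mem_Icc.1 hk
        calc C k k ≤ D * (3 * k ^ 2) ^ k := hdiag k hk1
          _ ≤ D * (3 * (n + 1) ^ 2) ^ k := by gcongr
          _ ≤ D * (3 * (n + 1) ^ 2) ^ (n + 1) :=
              Nat.mul_le_mul_left D (Nat.pow_le_pow_right (by positivity) hkn)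
    _ = D * ((n + 1) * (3 * (n + 1) ^ 2) ^ (n + 1)) := by
        rw [sum_const, Nat.card_Icc, Nat.add_sub_cancel, smul_eq_mul]; ring
    _ ≤ D * (12 * 36 ^ n * n ^ (2 * n)) :=
        Nat.mul_le_mul_left D (succ_mul_three_mul_sq_pow_le hn)
    _ = 12 * D * 36 ^ n * n ^ (2 * n) := by ring

/-- Complexity recursion bound for multilevel Picard schemes:
if nonnegative integers `C n M` (with `C n M = 0` for `n ≤ 0`) satisfy the MLP
cost recursion, then `Σ_{k=1}^{n+1} C k k ≤ 12(3e+g+2f)·36^n·n^{2n}`. -/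
theorem stmt15
    (e g f : ℕ) (he : 0 < e) (hg : 0 < g) (hf : 0 < f)
    (C : ℤ → ℕ → ℕ)
    (hzero : ∀ n : ℤ, n ≤ 0 → ∀ M : ℕ, C n M = 0)
    (hrec : ∀ n M : ℕ, 1 ≤ M →
      C n M ≤ (if 1 ≤ n then M ^ n * (M ^ M * e + g) else 0)
        + ∑ l ∈ Finset.range n,
            M ^ (n - l) * (M ^ M * e + f + C l M + C ((l : ℤ) - 1) M)) :
    ∀ n : ℕ, 1 ≤ n →
      ∑ k ∈ Finset.Icc 1 (n + 1), C k k
        ≤ 12 * (3 * e + g + 2 * f) * 36 ^ n * n ^ (2 * n) :=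
  stmt15_general e g f C hzero hrec
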